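/- arXiv:1410.3888 — 2 statements merged into one kernel-verified Lean document; each statement's English description precedes it below -/
import Mathlib

section
/- Let f:[a,b] → ℂ be continuously differentiable with f(a) = f(b) = 0. Then ∫_a^b |f(x)|² dx ≤ ((b−a)/π)² ∫_a^b |f′(x)|² dx. -/
/-!
With `c = π / (b - a)`, the weight `w x = -c cot (c (x - a))` solves the Riccati equation
`w' = c² + w²` on `(a, b)`, so that
`(w ‖f‖²)' = c² ‖f‖² - ‖f'‖² + ‖f' + w f‖² ≥ c² ‖f‖² - ‖f'‖²`.
Since `f` and `sin (c (x - a))` both vanish to first order at `a` and at `b`, `w ‖f‖²` tends to `0`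
at both endpoints, and integrating the inequality gives `c² ∫ ‖f‖² ≤ ∫ ‖f'‖²`.
-/

open MeasureTheory intervalIntegral Real Filter Topology Set

section NormedSpace

variable {E : Type*} [NormedAddCommGroup E] [NormedSpace ℝ E]

theorem tendsto_norm_sq_div_of_hasDerivAt {f : ℝ → E} {h : ℝ → ℝ} {d : E} {k p : ℝ}
    (hf : HasDerivAt f d p) (hfp : f p = 0) (hh : HasDerivAt h k p) (hhp : h p = 0)
    (hk : k ≠ 0) : Tendsto (fun x => ‖f x‖ ^ 2 / h x) (𝓝 p) (𝓝 0) := by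
  rw [← nhdsNE_sup_pure p, tendsto_sup, tendsto_pure_left]
  refine ⟨?_, fun s hs => by simpa [hfp] using mem_of_mem_nhds hs⟩
  have hlin : Tendsto (fun x => x - p) (𝓝[≠] p) (𝓝 0) :=
    tendsto_nhdsWithin_of_tendsto_nhds (by simpa using (continuous_sub_right p).tendsto p)
  have hlim := (hlin.mul ((hasDerivAt_iff_tendsto_slope.mp hf).norm.pow 2)).div
    (hasDerivAt_iff_tendsto_slope.mp hh) hk
  rw [zero_mul, zero_div] at hlim
  refine hlim.congr' ?_
  filter_upwards [self_mem_nhdsWithin] with x hx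
  have hx : x - p ≠ 0 := sub_ne_zero.2 hx
  simp only [Pi.div_apply, slope_def_module, hfp, hhp, sub_zero, norm_smul, smul_eq_mul,
    norm_inv, Real.norm_eq_abs, mul_pow, inv_pow, sq_abs]
  field_simp

theorem hasDerivAt_mul_sub_const (c p x : ℝ) : HasDerivAt (fun y => c * (y - p)) c x := by
  simpa using ((hasDerivAt_id x).sub_const p).const_mul c

noncomputable def cotWeight (c p x : ℝ) : ℝ := -c * (cos (c * (x - p)) / sin (c * (x - p)))

theorem hasDerivAt_cotWeight {c p x : ℝ} (hx : sin (c * (x - p)) ≠ 0) :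
    HasDerivAt (cotWeight c p) (c ^ 2 + cotWeight c p x ^ 2) x := by
  have hθ := hasDerivAt_mul_sub_const c p x
  refine ((((hasDerivAt_cos _).comp x hθ).div ((hasDerivAt_sin _).comp x hθ) hx).const_mul
    (-c)).congr_deriv ?_
  simp only [cotWeight, Function.comp_apply]
  field_simp
  ring

theorem continuousAt_cotWeight_mul_norm_sq {f : ℝ → E} {d : E} {c p q : ℝ} (hc : c ≠ 0)
    (hf : HasDerivAt f d q) (hfq : f q = 0) (hq : sin (c * (q - p)) = 0) :
    ContinuousAt (fun x => cotWeight c p x * ‖f x‖ ^ 2) q := by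
  have hcos : cos (c * (q - p)) ≠ 0 := fun h0 => by
    simpa [hq, h0] using sin_sq_add_cos_sq (c * (q - p))
  have hquot := tendsto_norm_sq_div_of_hasDerivAt hf hfq
    ((hasDerivAt_sin _).comp q (hasDerivAt_mul_sub_const c p q)) hq (mul_ne_zero hcos hc)
  have hcont : Continuous fun x => -c * cos (c * (x - p)) := by fun_prop
  have hlim := (hcont.tendsto q).mul hquot
  have hq0 : cotWeight c p q * ‖f q‖ ^ 2 = 0 := by simp [hfq]
  rw [mul_zero] at hlim
  rw [ContinuousAt, hq0]
  refine hlim.congr fun x => ?_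
  simp only [cotWeight, Function.comp_apply]
  ring

end NormedSpace

section InnerProductSpace

variable {F : Type*} [NormedAddCommGroup F] [InnerProductSpace ℝ F]

theorem HasDerivAt.mul_norm_sq_of_riccati {w : ℝ → ℝ} {f : ℝ → F} {f' : F} {c x : ℝ}
    (hw : HasDerivAt w (c ^ 2 + w x ^ 2) x) (hf : HasDerivAt f f' x) :
    HasDerivAt (fun y => w y * ‖f y‖ ^ 2)
      (c ^ 2 * ‖f x‖ ^ 2 - ‖f'‖ ^ 2 + ‖f' + w x • f x‖ ^ 2) x := by
  refine (hw.mul hf.norm_sq).congr_deriv ?_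
  rw [norm_add_sq_real, norm_smul, inner_smul_right, real_inner_comm, Real.norm_eq_abs, mul_pow,
    sq_abs]
  ring

theorem wirtinger_inequality {a b : ℝ} (hab : a < b) {f f' : ℝ → F}
    (hderiv : ∀ x ∈ Icc a b, HasDerivAt f (f' x) x) (hcont : ContinuousOn f' (Icc a b))
    (ha : f a = 0) (hb : f b = 0) :
    (π / (b - a)) ^ 2 * ∫ x in a..b, ‖f x‖ ^ 2 ≤ ∫ x in a..b, ‖f' x‖ ^ 2 := by
  set c := π / (b - a)
  have hc : 0 < c := div_pos pi_pos (sub_pos.2 hab)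
  have hcb : c * (b - a) = π := div_mul_cancel₀ _ (sub_pos.2 hab).ne'
  set G := fun x => cotWeight c a x * ‖f x‖ ^ 2
  have hG : ∀ x ∈ Ioo a b, HasDerivAt G
      (c ^ 2 * ‖f x‖ ^ 2 - ‖f' x‖ ^ 2 + ‖f' x + cotWeight c a x • f x‖ ^ 2) x := by
    intro x hx
    have hsin : sin (c * (x - a)) ≠ 0 :=
      (sin_pos_of_pos_of_lt_pi (by nlinarith [hx.1]) (by nlinarith [hx.2])).ne'
    exact (hasDerivAt_cotWeight hsin).mul_norm_sq_of_riccati (hderiv x (Ioo_subset_Icc_self hx))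
  have hGa : ContinuousAt G a := continuousAt_cotWeight_mul_norm_sq hc.ne'
    (hderiv a (left_mem_Icc.2 hab.le)) ha (by rw [sub_self, mul_zero, sin_zero])
  have hGb : ContinuousAt G b := continuousAt_cotWeight_mul_norm_sq hc.ne'
    (hderiv b (right_mem_Icc.2 hab.le)) hb (by rw [hcb, sin_pi])
  have hGcont : ContinuousOn G (Icc a b) := by
    intro x hx
    rcases hx.1.eq_or_lt with hax_eq | hax
    · rw [← hax_eq]
      exact hGa.continuousWithinAt
    rcases hx.2.eq_or_lt with hxb_eq | hxb
    · rw [hxb_eq]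
      exact hGb.continuousWithinAt
    exact (hG x ⟨hax, hxb⟩).continuousAt.continuousWithinAt
  have hfcont : ContinuousOn f (Icc a b) := fun x hx =>
    (hderiv x hx).continuousAt.continuousWithinAt
  have hφ : ContinuousOn (fun x => c ^ 2 * ‖f x‖ ^ 2 - ‖f' x‖ ^ 2) (Icc a b) := by fun_prop
  have key := integral_le_sub_of_hasDeriv_right_of_le hab.le hGcont
    (fun x hx => (hG x hx).hasDerivWithinAt) hφ.integrableOn_Icc
    (fun x _ => le_add_of_nonneg_right (sq_nonneg _))
  simp only [G, ha, hb, norm_zero, ne_eq, OfNat.ofNat_ne_zero, not_false_eq_true, zero_pow,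
    mul_zero, sub_zero] at key
  have hf_int : IntervalIntegrable (fun x => ‖f x‖ ^ 2) volume a b :=
    (hfcont.norm.pow 2).intervalIntegrable_of_Icc hab.le
  have hf'_int : IntervalIntegrable (fun x => ‖f' x‖ ^ 2) volume a b :=
    (hcont.norm.pow 2).intervalIntegrable_of_Icc hab.le
  rw [integral_sub (hf_int.const_mul _) hf'_int, intervalIntegral.integral_const_mul] at key
  linarith

end InnerProductSpace

/-- Wirtinger's inequality for complex-valued functions vanishing at both endpoints. -/
theorem wirtinger_complex (a b : ℝ) (hab : a < b) (f f' : ℝ → ℂ)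
    (hderiv : ∀ x ∈ Set.Icc a b, HasDerivAt f (f' x) x)
    (hcont : ContinuousOn f' (Set.Icc a b))
    (ha : f a = 0) (hb : f b = 0) :
    ∫ x in a..b, ‖f x‖ ^ 2 ≤ ((b - a) / Real.pi) ^ 2 * ∫ x in a..b, ‖f' x‖ ^ 2 := by
  have hba : b - a ≠ 0 := (sub_pos.2 hab).ne'
  calc ∫ x in a..b, ‖f x‖ ^ 2
      = ((b - a) / π) ^ 2 * ((π / (b - a)) ^ 2 * ∫ x in a..b, ‖f x‖ ^ 2) := by
        field_simp
    _ ≤ ((b - a) / π) ^ 2 * ∫ x in a..b, ‖f' x‖ ^ 2 := by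
        gcongr
        exact wirtinger_inequality hab hderiv hcont ha hb
end

section
/- Let g:[T, 2T] → ℝ be continuous and nonnegative, and suppose the zeros of a continuously differentiable function f:[T,2T] → ℂ in [T,2T], listed in increasing order as t̃_1 ≤ ... ≤ t̃_N (together with t̃_0 = T, t̃_{N+1} = 2T), satisfy t̃_{n+1} − t̃_n ≤ δ for all n, and f(T) = f(2T) = 0. If L²/κ² · (∫_T^{2T}|f|²)/(∫_T^{2T}|f′|²) > 1 where δ = κπ/L and ∫_T^{2T}|f′|² > 0, we obtain a contradiction; hence some gap between consecutive zeros of f in [T,2T] exceeds κπ/L. -/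
/-!
On a gap `[a, b]` put `c = π / (b - a)` and `φ x = sin (c (x - a))`, which is positive on `(a, b)`
and solves `φ'' = -c² φ`. For `w = φ' / φ` the Riccati equation `w' + w² = -c²` turns
`(w ‖f‖²)' = ‖f'‖² - ‖f' - w f‖² + (w' + w²) ‖f‖²` into `‖f'‖² - c² ‖f‖² ≥ (w ‖f‖²)'`.
Since `f` and `φ` both vanish to first order at `a` and `b`, the boundary term `w ‖f‖²` tends to
`0` there, which gives Wirtinger's inequality `∫ ‖f‖² ≤ ((b - a) / π)² ∫ ‖f'‖²`. Summed over gaps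
of length at most `κπ/L` it yields `∫ ‖f‖² ≤ (κ / L)² ∫ ‖f'‖²`, contradicting the ratio hypothesis.
-/

open MeasureTheory intervalIntegral

open Filter Topology Set Real

section

variable {E : Type*} [NormedAddCommGroup E] [InnerProductSpace ℝ E]

theorem HasDerivAt.mul_norm_sq {f : ℝ → E} {f' : E} {w : ℝ → ℝ} {w' x : ℝ}
    (hf : HasDerivAt f f' x) (hw : HasDerivAt w w' x) :
    HasDerivAt (fun y => w y * ‖f y‖ ^ 2)
      (‖f'‖ ^ 2 - ‖f' - w x • f x‖ ^ 2 + (w' + w x ^ 2) * ‖f x‖ ^ 2) x := by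
  refine (hw.mul hf.norm_sq).congr_deriv ?_
  rw [norm_sub_sq_real, norm_smul, real_inner_smul_right, mul_pow, Real.norm_eq_abs, sq_abs,
    real_inner_comm]
  ring

theorem HasDerivAt.div_riccati {φ φ' : ℝ → ℝ} {φ'' x : ℝ} (hφ : HasDerivAt φ (φ' x) x)
    (hφ' : HasDerivAt φ' φ'' x) (hx : φ x ≠ 0) :
    HasDerivAt (fun y => φ' y / φ y) (φ'' / φ x - (φ' x / φ x) ^ 2) x :=
  (hφ'.div hφ hx).congr_deriv (by field_simp)

theorem continuousAt_div_mul_norm_sq {f : ℝ → E} {φ ψ : ℝ → ℝ} {a φ'a : ℝ} {f'a : E}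
    (hf : HasDerivAt f f'a a) (hfa : f a = 0) (hφ : HasDerivAt φ φ'a a) (hφa : φ a = 0)
    (hφ'a : φ'a ≠ 0) (hψ : ContinuousAt ψ a) :
    ContinuousAt (fun x => ψ x / φ x * ‖f x‖ ^ 2) a := by
  rw [← continuousWithinAt_compl_self, ContinuousWithinAt, hfa, norm_zero, zero_pow two_ne_zero,
    mul_zero, tendsto_zero_iff_norm_tendsto_zero]
  have hlim : Tendsto (fun x => ‖ψ x‖ * ‖slope f a x‖ * ‖f x‖ / ‖slope φ a x‖) (𝓝[≠] a)
      (𝓝 (‖ψ a‖ * ‖f'a‖ * ‖f a‖ / ‖φ'a‖)) :=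
    (((hψ.norm.tendsto.mono_left nhdsWithin_le_nhds).mul
      (hasDerivAt_iff_tendsto_slope.1 hf).norm).mul
      (hf.continuousAt.norm.tendsto.mono_left nhdsWithin_le_nhds)).div
      (hasDerivAt_iff_tendsto_slope.1 hφ).norm (norm_ne_zero_iff.2 hφ'a)
  rw [hfa, norm_zero, mul_zero, zero_div] at hlim
  refine hlim.congr' (eventually_nhdsWithin_of_forall fun x (hx : x ≠ a) => ?_)
  have hx : x - a ≠ 0 := sub_ne_zero.2 hx
  simp only [slope_def_module, hfa, hφa, sub_zero, norm_smul, norm_mul, norm_div, norm_pow,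
    norm_norm, norm_inv]
  field_simp

theorem integral_norm_sq_le_wirtinger {f f' : ℝ → E} {a b : ℝ} (hab : a ≤ b)
    (hf : ∀ x ∈ Icc a b, HasDerivAt f (f' x) x) (hf' : ContinuousOn f' (Icc a b))
    (ha : f a = 0) (hb : f b = 0) :
    ∫ x in a..b, ‖f x‖ ^ 2 ≤ ((b - a) / π) ^ 2 * ∫ x in a..b, ‖f' x‖ ^ 2 := by
  rcases hab.eq_or_lt with rfl | hab
  · simp
  set c := π / (b - a)
  have hc : 0 < c := div_pos pi_pos (sub_pos.2 hab)
  set φ : ℝ → ℝ := fun x => sin (c * (x - a))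
  set φ' : ℝ → ℝ := fun x => c * cos (c * (x - a))
  have hlin : ∀ x, HasDerivAt (fun y => c * (y - a)) c x := fun x => by
    simpa using ((hasDerivAt_id x).sub_const a).const_mul c
  have hφ : ∀ x, HasDerivAt φ (φ' x) x := fun x => by
    simpa [φ', mul_comm] using (hlin x).sin
  have hφ' : ∀ x, HasDerivAt φ' (-c ^ 2 * φ x) x := fun x =>
    ((hlin x).cos.const_mul c).congr_deriv (by simp only [φ]; ring)
  have hφ_pos : ∀ x ∈ Ioo a b, 0 < φ x := fun x hx => by
    refine sin_pos_of_pos_of_lt_pi (mul_pos hc (sub_pos.2 hx.1)) ?_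
    calc c * (x - a) < c * (b - a) := by gcongr; exact hx.2
      _ = π := div_mul_cancel₀ _ (sub_pos.2 hab).ne'
  have hφa : φ a = 0 := by simp [φ]
  have hφb : φ b = 0 := by simp [φ, c, div_mul_cancel₀ _ (sub_pos.2 hab).ne']
  set G : ℝ → ℝ := fun x => φ' x / φ x * ‖f x‖ ^ 2
  have hG_deriv : ∀ x ∈ Ioo a b, HasDerivAt G
      (‖f' x‖ ^ 2 - ‖f' x - (φ' x / φ x) • f x‖ ^ 2 - c ^ 2 * ‖f x‖ ^ 2) x := fun x hx => by
    convert (hf x (Ioo_subset_Icc_self hx)).mul_norm_sq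
      ((hφ x).div_riccati (hφ' x) (hφ_pos x hx).ne') using 1
    field_simp [(hφ_pos x hx).ne']
    ring
  have hG_cont : ContinuousOn G (Icc a b) := by
    intro x hx
    refine ContinuousAt.continuousWithinAt ?_
    rcases eq_endpoints_or_mem_Ioo_of_mem_Icc hx with rfl | rfl | hx
    · exact continuousAt_div_mul_norm_sq (hf x hx) ha (hφ x) hφa (by simp [φ', hc.ne'])
        (hφ' x).continuousAt
    · refine continuousAt_div_mul_norm_sq (hf x hx) hb (hφ x) hφb ?_ (hφ' x).continuousAt
      simp [φ', c, div_mul_cancel₀ _ (sub_pos.2 hab).ne', hc.ne']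
    · exact (hG_deriv x hx).continuousAt
  have hint : IntegrableOn (fun x => ‖f' x‖ ^ 2 - c ^ 2 * ‖f x‖ ^ 2) (Icc a b) :=
    ((hf'.norm.pow 2).sub (continuousOn_const.mul
      ((HasDerivAt.continuousOn hf).norm.pow 2))).integrableOn_Icc
  have hkey := sub_le_integral_of_hasDeriv_right_of_le hab.le hG_cont
    (fun x hx => (hG_deriv x hx).hasDerivWithinAt) hint
    fun _ _ => sub_le_sub_right (sub_le_self _ (sq_nonneg _)) _
  have hf_int : IntervalIntegrable (fun x => ‖f x‖ ^ 2) volume a b :=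
    ((HasDerivAt.continuousOn hf).norm.pow 2).intervalIntegrable_of_Icc hab.le
  have hf'_int : IntervalIntegrable (fun x => ‖f' x‖ ^ 2) volume a b :=
    (hf'.norm.pow 2).intervalIntegrable_of_Icc hab.le
  simp only [G, ha, hb, norm_zero, zero_pow two_ne_zero, mul_zero, sub_zero] at hkey
  rw [integral_sub hf'_int (hf_int.const_mul _), intervalIntegral.integral_const_mul,
    sub_nonneg] at hkey
  have hc_inv : (b - a) / π = c⁻¹ := (inv_div _ _).symm
  rw [hc_inv, inv_pow, inv_mul_eq_div, le_div_iff₀ (by positivity)]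
  linarith

theorem integral_norm_sq_le_of_forall_gap_le {f f' : ℝ → E} {t : ℕ → ℝ} {N : ℕ} {δ : ℝ}
    (hmono : ∀ n ≤ N, t n ≤ t (n + 1)) (hgap : ∀ n ≤ N, t (n + 1) - t n ≤ δ)
    (hf : ∀ x ∈ Icc (t 0) (t (N + 1)), HasDerivAt f (f' x) x)
    (hf' : ContinuousOn f' (Icc (t 0) (t (N + 1)))) (hzero : ∀ n ≤ N + 1, f (t n) = 0) :
    ∫ x in t 0..t (N + 1), ‖f x‖ ^ 2 ≤ (δ / π) ^ 2 * ∫ x in t 0..t (N + 1), ‖f' x‖ ^ 2 := by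
  have ht : MonotoneOn t (Iic (N + 1)) :=
    monotoneOn_of_le_succ ordConnected_Iic fun n _ _ hn => hmono n (by simpa using hn)
  have hsub : ∀ n ≤ N, Icc (t n) (t (n + 1)) ⊆ Icc (t 0) (t (N + 1)) := fun n hn =>
    Icc_subset_Icc (ht (by simp) (by simp; omega) (Nat.zero_le n))
      (ht (by simp; omega) (by simp) (by omega))
  have hint : ∀ g : ℝ → ℝ, ContinuousOn g (Icc (t 0) (t (N + 1))) →
      ∀ n < N + 1, IntervalIntegrable g volume (t n) (t (n + 1)) := fun g hg n hn =>
    (hg.mono (hsub n (by omega))).intervalIntegrable_of_Icc (hmono n (by omega))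
  have hfc : ContinuousOn f (Icc (t 0) (t (N + 1))) := HasDerivAt.continuousOn hf
  rw [← sum_integral_adjacent_intervals (hint (fun x => ‖f x‖ ^ 2) (hfc.norm.pow 2)),
    ← sum_integral_adjacent_intervals (hint (fun x => ‖f' x‖ ^ 2) (hf'.norm.pow 2)),
    Finset.mul_sum]
  refine Finset.sum_le_sum fun n hn => ?_
  have hn : n ≤ N := by simpa [Nat.lt_succ_iff] using hn
  have hgap_sq : ((t (n + 1) - t n) / π) ^ 2 ≤ (δ / π) ^ 2 := by
    have := sub_nonneg.2 (hmono n hn)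
    gcongr
    exact hgap n hn
  refine (integral_norm_sq_le_wirtinger (hmono n hn) (fun x hx => hf x (hsub n hn hx))
    (hf'.mono (hsub n hn)) (hzero n (by omega)) (hzero (n + 1) (by omega))).trans ?_
  exact mul_le_mul_of_nonneg_right hgap_sq
    (integral_nonneg (hmono n hn) fun x _ => sq_nonneg _)

end

theorem gap_detection_general (T L κ : ℝ)
    (N : ℕ) (t : ℕ → ℝ) (ht0 : t 0 = T) (htN : t (N + 1) = 2 * T)
    (hmono : ∀ n ≤ N, t n ≤ t (n + 1))
    (f f' : ℝ → ℂ)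
    (hderiv : ∀ x ∈ Set.Icc T (2 * T), HasDerivAt f (f' x) x)
    (hcont : ContinuousOn f' (Set.Icc T (2 * T)))
    (hzero : ∀ n ≤ N + 1, f (t n) = 0)
    (hpos : 0 < ∫ x in T..(2 * T), ‖f' x‖ ^ 2)
    (hratio : 1 < L ^ 2 / κ ^ 2 *
        ((∫ x in T..(2 * T), ‖f x‖ ^ 2) / ∫ x in T..(2 * T), ‖f' x‖ ^ 2)) :
    ∃ n ≤ N, κ * Real.pi / L < t (n + 1) - t n := by
  by_contra! hgap
  rw [← htN, ← ht0] at hderiv hcont hpos hratio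
  have hwirt := integral_norm_sq_le_of_forall_gap_le hmono hgap hderiv hcont hzero
  rw [mul_div_right_comm, mul_div_cancel_right₀ _ pi_ne_zero] at hwirt
  have hconst : L ^ 2 / κ ^ 2 * (κ / L) ^ 2 ≤ 1 := by
    rw [← div_pow, ← mul_pow, div_mul_div_comm, mul_comm κ L]
    exact (sq_le_one_iff_abs_le_one _).2 (abs_div (L * κ) _ ▸ div_self_le_one _)
  have := mul_le_mul_of_nonneg_left (div_le_of_le_mul₀ hpos.le (sq_nonneg _) hwirt)
    (by positivity : 0 ≤ L ^ 2 / κ ^ 2)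
  linarith

/-- The Hall–Bredberg gap-detection principle: if `f` is continuously differentiable on
`[T, 2T]`, vanishes at `T`, `2T` and at the points `t̃_1 ≤ … ≤ t̃_N`, and
`L²/κ² · ∫|f|²/∫|f'|² > 1`, then some gap between consecutive points of the list
(augmented by the endpoints) exceeds `κπ/L`. -/
theorem gap_detection (T L κ : ℝ) (hT : 0 < T) (hL : 0 < L) (hκ : 0 < κ)
    (N : ℕ) (t : ℕ → ℝ) (ht0 : t 0 = T) (htN : t (N + 1) = 2 * T)
    (hmono : ∀ n ≤ N, t n ≤ t (n + 1))
    (f f' : ℝ → ℂ)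
    (hderiv : ∀ x ∈ Set.Icc T (2 * T), HasDerivAt f (f' x) x)
    (hcont : ContinuousOn f' (Set.Icc T (2 * T)))
    (hzero : ∀ n ≤ N + 1, f (t n) = 0)
    (hpos : 0 < ∫ x in T..(2 * T), ‖f' x‖ ^ 2)
    (hratio : 1 < L ^ 2 / κ ^ 2 *
        ((∫ x in T..(2 * T), ‖f x‖ ^ 2) / ∫ x in T..(2 * T), ‖f' x‖ ^ 2)) :
    ∃ n ≤ N, κ * Real.pi / L < t (n + 1) - t n :=
  gap_detection_general T L κ N t ht0 htN hmono f f' hderiv hcont hzero hpos hratio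
end
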